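/- arXiv:1007.0683 — 8 statements merged into one kernel-verified Lean document; each statement's English description precedes it below -/
import Mathlib

section
/- If the system is feasible, then there exist real numbers f_X^i (for X ∈ S and 1 ≤ i ≤ τ_X) such that: (1) q*_X ≤ Σ_{i=1}^{τ_X} f_X^i r_X^i for every X ∈ S; (2) 0 ≤ f_X^i ≤ T/τ_X for every X ∈ S and 1 ≤ i ≤ τ_X; and (3) Σ_{X∈S} Σ_{i=1}^{τ_X} f_X^i ≤ T. -/
/-- The number of time slots in the `p`-th period of task `X` (the interval
`[p·τ_X, (p+1)·τ_X)`) at which the schedule `η` executes `X`. -/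
def execCount {S : Type*} [DecidableEq S] (τ : S → ℕ) (η : ℕ → Option S)
    (X : S) (p : ℕ) : ℕ :=
  ((Finset.Ico (p * τ X) ((p + 1) * τ X)).filter (fun t => η t = some X)).card

/-- The reward obtained by task `X` in the `k`-th frame (slots `[kT, (k+1)T)`):
the sum over the `T/τ_X` periods of `X` contained in that frame of
`r_X^1 + ⋯ + r_X^n`, where `n` is the number of executions in that period. -/
def frameReward {S : Type*} [DecidableEq S] (τ : S → ℕ) (T : ℕ) (r : S → ℕ → ℝ)
    (η : ℕ → Option S) (X : S) (k : ℕ) : ℝ :=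
  ∑ p ∈ Finset.Ico (k * (T / τ X)) ((k + 1) * (T / τ X)),
    ∑ i ∈ Finset.Icc 1 (execCount τ η X p), r X i

/-- The long-term average reward per frame of task `X` under schedule `η`. -/
noncomputable def avgReward {S : Type*} [DecidableEq S] (τ : S → ℕ) (T : ℕ)
    (r : S → ℕ → ℝ) (η : ℕ → Option S) (X : S) : ℝ :=
  Filter.liminf
    (fun k : ℕ => (∑ j ∈ Finset.range k, frameReward τ T r η X j) / (k : ℝ))
    Filter.atTop

/-! Fix a feasible schedule and let `c_X^i(k)` be the number of periods of `X` in frame `k`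
in which `X` runs at least `i` times. Layer-cake summation writes the reward of `X` in frame `k`
as `∑ᵢ c_X^i(k) r_X^i`; moreover `c_X^i(k) ≤ T/τ_X`, and `∑_X ∑ᵢ c_X^i(k)` counts the busy slots
of the frame, so it is at most `T`. These constraints survive averaging over the first `K` frames.
The averages lie in a compact box, so they have a cluster point `f`; the constraints are closed,
hence hold at `f`, and the liminf of the average reward is at most its value at `f`. -/

open Finset Filter Topology

theorem Finset.sum_Ico_sum_Ico_mul {M : Type*} [AddCommMonoid M] (f : ℕ → M) (τ : ℕ)
    {a b : ℕ} (hab : a ≤ b) :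
    ∑ p ∈ Ico a b, ∑ t ∈ Ico (p * τ) ((p + 1) * τ), f t = ∑ t ∈ Ico (a * τ) (b * τ), f t := by
  induction b, hab using Nat.le_induction with
  | base => simp
  | succ b hab ih =>
    rw [sum_Ico_succ_top hab, ih, sum_Ico_consecutive _ (Nat.mul_le_mul_right τ hab)
      (Nat.mul_le_mul_right τ b.le_succ)]

-- Layer-cake summation: `∑ᵢ₌₁ⁿ g i = ∑ᵢ₌₁ᵐ [i ≤ n] • g i`, summed over `p ∈ s` with `n = n p`.
theorem Finset.sum_sum_Icc_eq_sum_card_nsmul {ι M : Type*} [AddCommMonoid M] (s : Finset ι)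
    (n : ι → ℕ) {m : ℕ} (hn : ∀ p ∈ s, n p ≤ m) (g : ℕ → M) :
    ∑ p ∈ s, ∑ i ∈ Icc 1 (n p), g i = ∑ i ∈ Icc 1 m, #{p ∈ s | i ≤ n p} • g i := by
  have hIcc : ∀ p ∈ s, Icc 1 (n p) = {i ∈ Icc 1 m | i ≤ n p} := fun p hp => by
    ext i
    have := hn p hp
    simp only [mem_Icc, mem_filter]
    omega
  rw [sum_congr rfl fun p hp => by rw [hIcc p hp, sum_filter], sum_comm]
  exact sum_congr rfl fun i _ => by rw [← sum_filter, sum_const]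

theorem Finset.sum_card_filter_eq_some_le {α β : Type*} [Fintype β] [DecidableEq β]
    (s : Finset α) (g : α → Option β) : ∑ b, #{a ∈ s | g a = some b} ≤ #s := by
  rw [card_eq_sum_card_fiberwise (t := (univ : Finset (Option β))) fun _ _ => mem_univ _,
    Fintype.sum_option]
  exact Nat.le_add_left _ _

theorem sum_range_div_le {u : ℕ → ℝ} {c : ℝ} (hc : 0 ≤ c) (hu : ∀ j, u j ≤ c) (K : ℕ) :
    (∑ j ∈ range K, u j) / K ≤ c := by
  rcases K.eq_zero_or_pos with rfl | hK
  · simpa using hc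
  rw [div_le_iff₀ (by exact_mod_cast hK), mul_comm]
  simpa using sum_le_card_nsmul (range K) u c fun j _ => hu j

theorem MapClusterPt.liminf_comp_le {ι X : Type*} [TopologicalSpace X] {s : Set X}
    (hs : IsCompact s) {F : Filter ι} {u : ι → X} (hu : ∀ i, u i ∈ s) {L : X}
    (hL : MapClusterPt L F u) {φ : X → ℝ} (hφ : Continuous φ) :
    Filter.liminf (φ ∘ u) F ≤ φ L := by
  obtain ⟨m, hm⟩ := (hs.image hφ).bddBelow
  exact (hL.continuousAt_comp hφ.continuousAt).liminf_le
    (isBoundedUnder_of ⟨m, fun i => hm ⟨u i, hu i, rfl⟩⟩)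

section Schedule

variable {S : Type*} [DecidableEq S] (τ : S → ℕ) (T : ℕ) (η : ℕ → Option S)

theorem execCount_le (X : S) (p : ℕ) : execCount τ η X p ≤ τ X :=
  (card_filter_le _ _).trans (by simp [Nat.succ_mul])

def periodsExecutedAtLeast (X : S) (i k : ℕ) : ℕ :=
  #{p ∈ Ico (k * (T / τ X)) ((k + 1) * (T / τ X)) | i ≤ execCount τ η X p}

theorem periodsExecutedAtLeast_le (X : S) (i k : ℕ) :
    periodsExecutedAtLeast τ T η X i k ≤ T / τ X :=
  (card_filter_le _ _).trans (by simp [Nat.succ_mul])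

theorem frameReward_eq_sum_periodsExecutedAtLeast_mul (r : S → ℕ → ℝ) (X : S) (k : ℕ) :
    frameReward τ T r η X k = ∑ i ∈ Icc 1 (τ X), periodsExecutedAtLeast τ T η X i k * r X i := by
  simp only [frameReward, periodsExecutedAtLeast, ← nsmul_eq_mul]
  exact sum_sum_Icc_eq_sum_card_nsmul _ _ (fun p _ => execCount_le τ η X p) _

theorem sum_periodsExecutedAtLeast {X : S} (hX : τ X ∣ T) (k : ℕ) :
    ∑ i ∈ Icc 1 (τ X), periodsExecutedAtLeast τ T η X i k
      = #{t ∈ Ico (k * T) ((k + 1) * T) | η t = some X} := by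
  have hframe : ∀ n, n * (T / τ X) * τ X = n * T := fun n => by
    rw [mul_assoc, Nat.div_mul_cancel hX]
  have hlayer := sum_sum_Icc_eq_sum_card_nsmul (Ico (k * (T / τ X)) ((k + 1) * (T / τ X)))
    (execCount τ η X) (fun p _ => execCount_le τ η X p) (fun _ => 1)
  simp only [smul_eq_mul, mul_one, sum_const, Nat.card_Icc, Nat.add_sub_cancel] at hlayer
  calc ∑ i ∈ Icc 1 (τ X), periodsExecutedAtLeast τ T η X i k
      = ∑ p ∈ Ico (k * (T / τ X)) ((k + 1) * (T / τ X)), execCount τ η X p := hlayer.symm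
    _ = #{t ∈ Ico (k * (T / τ X) * τ X) ((k + 1) * (T / τ X) * τ X) | η t = some X} := by
      simp only [execCount, card_filter]
      exact sum_Ico_sum_Ico_mul _ _ (Nat.mul_le_mul_right _ k.le_succ)
    _ = #{t ∈ Ico (k * T) ((k + 1) * T) | η t = some X} := by rw [hframe, hframe]

theorem sum_sum_periodsExecutedAtLeast_le [Fintype S] (hT : ∀ X, τ X ∣ T) (k : ℕ) :
    ∑ X, ∑ i ∈ Icc 1 (τ X), periodsExecutedAtLeast τ T η X i k ≤ T := by
  simp only [sum_periodsExecutedAtLeast τ T η (hT _)]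
  exact (sum_card_filter_eq_some_le _ η).trans (by simp [Nat.succ_mul])

noncomputable def avgPeriodsExecutedAtLeast (K : ℕ) (X : S) (i : ℕ) : ℝ :=
  (∑ j ∈ range K, (periodsExecutedAtLeast τ T η X i j : ℝ)) / K

theorem avgPeriodsExecutedAtLeast_nonneg (K : ℕ) (X : S) (i : ℕ) :
    0 ≤ avgPeriodsExecutedAtLeast τ T η K X i := by
  unfold avgPeriodsExecutedAtLeast
  positivity

theorem avgPeriodsExecutedAtLeast_le (K : ℕ) (X : S) (i : ℕ) :
    avgPeriodsExecutedAtLeast τ T η K X i ≤ (T : ℝ) / τ X :=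
  sum_range_div_le (by positivity)
    (fun j => (Nat.cast_le.2 (periodsExecutedAtLeast_le τ T η X i j)).trans Nat.cast_div_le) K

theorem avgPeriodsExecutedAtLeast_mem_Icc (K : ℕ) :
    avgPeriodsExecutedAtLeast τ T η K ∈ Set.Icc 0 (fun _ _ => (T : ℝ)) :=
  ⟨fun X i => avgPeriodsExecutedAtLeast_nonneg τ T η K X i, fun X i =>
    sum_range_div_le (by positivity) (fun j => Nat.cast_le.2
      ((periodsExecutedAtLeast_le τ T η X i j).trans (Nat.div_le_self T (τ X)))) K⟩

theorem sum_sum_avgPeriodsExecutedAtLeast_le [Fintype S] (hT : ∀ X, τ X ∣ T) (K : ℕ) :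
    ∑ X, ∑ i ∈ Icc 1 (τ X), avgPeriodsExecutedAtLeast τ T η K X i ≤ T := by
  have hswap : ∑ X, ∑ i ∈ Icc 1 (τ X), avgPeriodsExecutedAtLeast τ T η K X i
      = (∑ j ∈ range K, ∑ X, ∑ i ∈ Icc 1 (τ X), (periodsExecutedAtLeast τ T η X i j : ℝ)) / K := by
    simp only [avgPeriodsExecutedAtLeast, ← sum_div]
    rw [sum_congr rfl fun X _ => sum_comm, sum_comm]
  rw [hswap]
  exact sum_range_div_le (by positivity)
    (fun j => by exact_mod_cast sum_sum_periodsExecutedAtLeast_le τ T η hT j) K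

theorem sum_frameReward_div_eq (r : S → ℕ → ℝ) (X : S) (K : ℕ) :
    (∑ j ∈ range K, frameReward τ T r η X j) / K
      = ∑ i ∈ Icc 1 (τ X), avgPeriodsExecutedAtLeast τ T η K X i * r X i := by
  simp only [frameReward_eq_sum_periodsExecutedAtLeast_mul, avgPeriodsExecutedAtLeast,
    div_mul_eq_mul_div, ← sum_div, sum_mul]
  rw [sum_comm]

end Schedule

theorem feasible_implies_lp_general
    {S : Type*} [Fintype S] [DecidableEq S]
    (τ : S → ℕ)
    (T : ℕ) (hT : T = Finset.univ.lcm τ)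
    (r : S → ℕ → ℝ)
    (qstar : S → ℝ)
    (hfeasible : ∃ η : ℕ → Option S, ∀ X, qstar X ≤ avgReward τ T r η X) :
    ∃ f : S → ℕ → ℝ,
      (∀ X, qstar X ≤ ∑ i ∈ Finset.Icc 1 (τ X), f X i * r X i) ∧
      (∀ X, ∀ i ∈ Finset.Icc 1 (τ X),
        0 ≤ f X i ∧ f X i ≤ (T : ℝ) / (τ X : ℝ)) ∧
      (∑ X : S, ∑ i ∈ Finset.Icc 1 (τ X), f X i ≤ (T : ℝ)) := by
  obtain ⟨η, hη⟩ := hfeasible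
  have hdvd : ∀ X, τ X ∣ T := fun X => hT ▸ dvd_lcm (mem_univ X)
  have hbox := avgPeriodsExecutedAtLeast_mem_Icc τ T η
  obtain ⟨L, -, hL⟩ := isCompact_Icc.exists_mapClusterPt (f := atTop)
    (tendsto_principal.2 (.of_forall hbox))
  refine ⟨L, fun X => ?_, fun X i _ => ?_, ?_⟩
  · calc qstar X ≤ avgReward τ T r η X := hη X
      _ = liminf ((fun f => ∑ i ∈ Icc 1 (τ X), f X i * r X i) ∘
            avgPeriodsExecutedAtLeast τ T η) atTop := by
        simp only [avgReward, Function.comp_def, sum_frameReward_div_eq]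
      _ ≤ _ := hL.liminf_comp_le isCompact_Icc hbox (by fun_prop)
  · exact (isClosed_Icc.preimage (by fun_prop : Continuous fun f : S → ℕ → ℝ => f X i))
      |>.mem_of_mapClusterPt hL (.of_forall fun K =>
        ⟨avgPeriodsExecutedAtLeast_nonneg τ T η K X i, avgPeriodsExecutedAtLeast_le τ T η K X i⟩)
  · have hsum : Continuous fun f : S → ℕ → ℝ => ∑ X, ∑ i ∈ Icc 1 (τ X), f X i := by fun_prop
    exact (isClosed_le hsum continuous_const).mem_of_mapClusterPt hL
      (.of_forall (sum_sum_avgPeriodsExecutedAtLeast_le τ T η hdvd))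

/-- Lemma 1, necessity.  If the system is feasible, then
there exist reals `f_X^i` satisfying the three conditions. -/
theorem feasible_implies_lp
    {S : Type*} [Fintype S] [Nonempty S] [DecidableEq S]
    (τ : S → ℕ) (hτ : ∀ X, 0 < τ X)
    (T : ℕ) (hT : T = Finset.univ.lcm τ)
    (r : S → ℕ → ℝ)
    (hr_nonneg : ∀ X, ∀ i ∈ Finset.Icc 1 (τ X), 0 ≤ r X i)
    (hr_anti : ∀ X, ∀ i, 1 ≤ i → i + 1 ≤ τ X → r X (i + 1) ≤ r X i)
    (qstar : S → ℝ) (hqstar : ∀ X, 0 < qstar X)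
    (hfeasible : ∃ η : ℕ → Option S, ∀ X, qstar X ≤ avgReward τ T r η X) :
    ∃ f : S → ℕ → ℝ,
      (∀ X, qstar X ≤ ∑ i ∈ Finset.Icc 1 (τ X), f X i * r X i) ∧
      (∀ X, ∀ i ∈ Finset.Icc 1 (τ X),
        0 ≤ f X i ∧ f X i ≤ (T : ℝ) / (τ X : ℝ)) ∧
      (∑ X : S, ∑ i ∈ Finset.Icc 1 (τ X), f X i ≤ (T : ℝ)) :=
  feasible_implies_lp_general τ T hT r qstar hfeasible
end

section
/- For every subset R of the rows of H there exists a partition R = R₁ ∪ R₂ into two disjoint sets such that for every column j, Σ_{i∈R₁} h_{i,j} − Σ_{i∈R₂} h_{i,j} ∈ {−1, 0, 1}; that is, H satisfies the Ghouila–Houri condition for total unimodularity. -/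
/-- The `(2N+1) × N` matrix `H` from the feasibility analysis (0-indexed):
row `0` is all ones, and for each column `j`, row `2j+1` has a `1` and row
`2j+2` has a `-1` in column `j`; all other entries are `0`.
(In the paper's 1-based indexing: `h_{1,j} = 1`, `h_{2j,j} = 1`,
`h_{2j+1,j} = -1`.) -/
def paperMatrixH (N : ℕ) : Matrix (Fin (2 * N + 1)) (Fin N) ℤ :=
  fun i j =>
    if (i : ℕ) = 0 then 1
    else if (i : ℕ) = 2 * (j : ℕ) + 1 then 1
    else if (i : ℕ) = 2 * (j : ℕ) + 2 then -1
    else 0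

/-!
Column `j` of `H` is `e₀ + e_{2j+1} - e_{2j+2}`. Put row `0` into `R₂`, every row `2j+1` into
`R₁`, and row `2j+2` on the side of its partner `2j+1` when that partner lies in `R` (so that
the two cancel), and into `R₁` otherwise. In every column at most one nonzero term survives.
-/

namespace PaperMatrixH

variable {N : ℕ}

def plusRow (j : Fin N) : Fin (2 * N + 1) := ⟨2 * j + 1, by omega⟩

def minusRow (j : Fin N) : Fin (2 * N + 1) := ⟨2 * j + 2, by omega⟩

lemma plusRow_ne_zero (j : Fin N) : plusRow j ≠ 0 := by
  simp [plusRow, Fin.ext_iff]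

lemma minusRow_ne_zero (j : Fin N) : minusRow j ≠ 0 := by
  simp [minusRow, Fin.ext_iff]

lemma minusRow_ne_plusRow (j k : Fin N) : minusRow j ≠ plusRow k := by
  simp only [minusRow, plusRow, ne_eq, Fin.ext_iff]
  omega

lemma minusRow_injective : Function.Injective (minusRow (N := N)) := by
  intro j k h
  simp only [minusRow, Fin.ext_iff] at h
  exact Fin.ext (by omega)

lemma paperMatrixH_apply (i : Fin (2 * N + 1)) (j : Fin N) :
    paperMatrixH N i j =
      (if i = 0 then 1 else 0) + (if i = plusRow j then 1 else 0)
        - (if i = minusRow j then 1 else 0) := by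
  obtain ⟨i, hi⟩ := i
  simp only [paperMatrixH, plusRow, minusRow, Fin.ext_iff, Fin.val_zero]
  split_ifs <;> omega

lemma sum_paperMatrixH (S : Finset (Fin (2 * N + 1))) (j : Fin N) :
    ∑ i ∈ S, paperMatrixH N i j =
      (if 0 ∈ S then 1 else 0) + (if plusRow j ∈ S then 1 else 0)
        - (if minusRow j ∈ S then 1 else 0) := by
  simp [paperMatrixH_apply, Finset.sum_add_distrib, Finset.sum_sub_distrib]

def IsPositiveRow (R : Finset (Fin (2 * N + 1))) (i : Fin (2 * N + 1)) : Prop :=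
  ∃ j, i = plusRow j ∨ (i = minusRow j ∧ plusRow j ∈ R)

lemma not_isPositiveRow_zero (R : Finset (Fin (2 * N + 1))) : ¬IsPositiveRow R 0 := by
  rintro ⟨j, h | ⟨h, -⟩⟩
  · exact plusRow_ne_zero j h.symm
  · exact minusRow_ne_zero j h.symm

lemma isPositiveRow_plusRow (R : Finset (Fin (2 * N + 1))) (j : Fin N) :
    IsPositiveRow R (plusRow j) :=
  ⟨j, Or.inl rfl⟩

lemma isPositiveRow_minusRow_iff (R : Finset (Fin (2 * N + 1))) (j : Fin N) :
    IsPositiveRow R (minusRow j) ↔ plusRow j ∈ R := by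
  constructor
  · rintro ⟨k, h | ⟨h, hk⟩⟩
    · exact absurd h (minusRow_ne_plusRow j k)
    · rwa [minusRow_injective h]
  · exact fun h ↦ ⟨j, Or.inr ⟨rfl, h⟩⟩

end PaperMatrixH

open PaperMatrixH in
theorem paperMatrixH_ghouilaHouri_general (N : ℕ) :
    ∀ R : Finset (Fin (2 * N + 1)),
      ∃ R₁ R₂ : Finset (Fin (2 * N + 1)),
        Disjoint R₁ R₂ ∧ R₁ ∪ R₂ = R ∧
        ∀ j : Fin N,
          (∑ i ∈ R₁, paperMatrixH N i j) - (∑ i ∈ R₂, paperMatrixH N i j)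
            ∈ ({-1, 0, 1} : Set ℤ) := by
  classical
  intro R
  refine ⟨R.filter (IsPositiveRow R), R.filter (¬IsPositiveRow R ·),
    Finset.disjoint_filter_filter_not R R _, Finset.filter_union_filter_not_eq _ R, fun j ↦ ?_⟩
  simp only [sum_paperMatrixH, Finset.mem_filter, not_isPositiveRow_zero,
    isPositiveRow_plusRow, isPositiveRow_minusRow_iff]
  by_cases h0 : 0 ∈ R <;> by_cases h1 : plusRow j ∈ R <;> by_cases h2 : minusRow j ∈ R <;>
    simp [h0, h1, h2]

/-- Theorem 2 application.  The matrix `H` satisfies the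
Ghouila–Houri condition: every subset `R` of its rows can be partitioned into
two disjoint sets `R₁ ∪ R₂ = R` such that in every column the difference of
the two partial row-sums lies in `{-1, 0, 1}`. -/
theorem paperMatrixH_ghouilaHouri (N : ℕ) (hN : 0 < N) :
    ∀ R : Finset (Fin (2 * N + 1)),
      ∃ R₁ R₂ : Finset (Fin (2 * N + 1)),
        Disjoint R₁ R₂ ∧ R₁ ∪ R₂ = R ∧
        ∀ j : Fin N,
          (∑ i ∈ R₁, paperMatrixH N i j) - (∑ i ∈ R₂, paperMatrixH N i j)
            ∈ ({-1, 0, 1} : Set ℤ) :=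
  paperMatrixH_ghouilaHouri_general N
end

section
/- Let n_X^i (for X ∈ S and 1 ≤ i ≤ τ_X) be nonnegative integers with n_X^i ≤ T/τ_X for all X and i, and Σ_{X∈S} Σ_{i=1}^{τ_X} n_X^i ≤ T. For each task X and each integer t, define d_X(t) = Σ_{i=1}^{τ_X} #{k ∈ ℕ : k < n_X^i and T − kτ_X ≤ t}, i.e., the number of marked deadlines of X that are at most t when the i-th execution of each job of X is assigned the deadlines T, T−τ_X, …, T−(n_X^i−1)τ_X. Then Σ_{X∈S} d_X(t) ≤ t for every integer t with 1 ≤ t ≤ T. -/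
/-- The number of marked deadlines of task `X` that are `≤ t`, when for each
`i` the `i`-th execution of the jobs of `X` is assigned the `n_X^i` deadlines
`T, T − τ_X, …, T − (n_X^i − 1)·τ_X`. -/
def deadlineCount {S : Type*} (τ : S → ℕ) (T : ℕ) (n : S → ℕ → ℕ)
    (X : S) (t : ℕ) : ℕ :=
  ∑ i ∈ Finset.Icc 1 (τ X),
    ((Finset.range (n X i)).filter (fun k => T - k * τ X ≤ t)).card

/-
For a single execution with `n` deadlines `T, T − τ, …, T − (n − 1)τ` and `nτ ≤ T`, the
deadlines that are `≤ t` are the last ones, `T − kτ` for `m ≤ k < n`, and `T − mτ ≤ t`;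
so `(n − m)τ ≤ T − mτ ≤ t`, which gives the proportional bound `T · count ≤ n · t`.
Summing over all tasks and executions and using `Σ n ≤ T` yields `T · Σ count ≤ T · t`.
-/

open Finset

lemma mul_card_filter_sub_mul_le {τ T t n : ℕ} (hn : n * τ ≤ T) :
    T * #{k ∈ range n | T - k * τ ≤ t} ≤ n * t := by
  set F := {k ∈ range n | T - k * τ ≤ t}
  rcases F.eq_empty_or_nonempty with hF | hF
  · simp [hF]
  obtain ⟨hm_lt, hm_t⟩ := mem_filter.mp (F.min'_mem hF)
  set m := F.min' hF
  have hF_sub : F ⊆ Ico m n := fun k hk =>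
    mem_Ico.mpr ⟨F.min'_le k hk, mem_range.mp (mem_filter.mp hk).1⟩
  have hcard : #F ≤ n - m := by simpa using card_le_card hF_sub
  obtain ⟨d, hd⟩ := Nat.exists_eq_add_of_le (mem_range.mp hm_lt).le
  rw [hd, add_mul] at hn
  have hdτ : d * τ ≤ t := by omega
  have hT : T ≤ t + m * τ := by omega
  calc T * #F ≤ T * d := Nat.mul_le_mul_left T (by omega)
    _ ≤ (t + m * τ) * d := Nat.mul_le_mul_right d hT
    _ = t * d + m * (d * τ) := by ring
    _ ≤ t * d + m * t := by gcongr
    _ = n * t := by rw [hd]; ring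

lemma mul_deadlineCount_le {S : Type*} (τ : S → ℕ) (T : ℕ) (n : S → ℕ → ℕ) (X : S)
    (hn_le : ∀ i ∈ Icc 1 (τ X), n X i ≤ T / τ X) (t : ℕ) :
    T * deadlineCount τ T n X t ≤ (∑ i ∈ Icc 1 (τ X), n X i) * t := by
  rw [deadlineCount, mul_sum, sum_mul]
  exact sum_le_sum fun i hi =>
    mul_card_filter_sub_mul_le
      ((Nat.mul_le_mul_right _ (hn_le i hi)).trans (Nat.div_mul_le_self T (τ X)))

theorem deadlineCount_le_general
    {S : Type*} [Fintype S]
    (τ : S → ℕ)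
    (T : ℕ)
    (n : S → ℕ → ℕ)
    (hn_le : ∀ X, ∀ i ∈ Finset.Icc 1 (τ X), n X i ≤ T / τ X)
    (hn_sum : ∑ X : S, ∑ i ∈ Finset.Icc 1 (τ X), n X i ≤ T) :
    ∀ t : ℕ, 1 ≤ t → t ≤ T → ∑ X : S, deadlineCount τ T n X t ≤ t := by
  intro t ht1 htT
  refine Nat.le_of_mul_le_mul_left ?_ (show 0 < T by omega)
  calc T * ∑ X, deadlineCount τ T n X t
      ≤ ∑ X, (∑ i ∈ Icc 1 (τ X), n X i) * t := by
        rw [mul_sum]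
        exact sum_le_sum fun X _ => mul_deadlineCount_le τ T n X (hn_le X) t
    _ = (∑ X, ∑ i ∈ Icc 1 (τ X), n X i) * t := by rw [sum_mul]
    _ ≤ T * t := Nat.mul_le_mul_right t hn_sum

/-- Eq. (6) of the paper.  If the nonnegative integers
`n_X^i` satisfy `n_X^i ≤ T/τ_X` and `Σ_X Σ_i n_X^i ≤ T`, then for every
`1 ≤ t ≤ T` the total number of marked deadlines not exceeding `t` is at
most `t`. -/
theorem deadlineCount_le
    {S : Type*} [Fintype S] [Nonempty S]
    (τ : S → ℕ) (hτ : ∀ X, 0 < τ X)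
    (T : ℕ) (hT : T = Finset.univ.lcm τ)
    (n : S → ℕ → ℕ)
    (hn_le : ∀ X, ∀ i ∈ Finset.Icc 1 (τ X), n X i ≤ T / τ X)
    (hn_sum : ∑ X : S, ∑ i ∈ Finset.Icc 1 (τ X), n X i ≤ T) :
    ∀ t : ℕ, 1 ≤ t → t ≤ T → ∑ X : S, deadlineCount τ T n X t ≤ t :=
  deadlineCount_le_general τ T n hn_le hn_sum
end

section
/- Almost surely, D(k)/k → 0 as k → ∞. -/
/-!
By the strong law of large numbers, `K n / n` converges almost surely, so the gaps
`K (n + 1) - K n` are `o(n)`. Since `D` vanishes at each renewal time and grows by at most `c`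
per step, `D k` is at most `c` times the length of the renewal interval containing `k`, whose
index is at most `k`; hence `D k / k → 0`.
-/

open MeasureTheory ProbabilityTheory Filter Topology

lemma le_add_mul_sub_of_succ_le_add {D : ℕ → ℝ} {c : ℝ} (hD : ∀ k, D (k + 1) ≤ D k + c)
    {i j : ℕ} (hij : i ≤ j) : D j ≤ D i + c * (j - i) := by
  have : Antitone fun k : ℕ => D k - c * k :=
    antitone_nat_of_succ_le fun k => by push_cast; linarith [hD k]
  linarith [this hij]

lemma tendsto_sub_div_of_tendsto_div {u : ℕ → ℝ} {m : ℝ}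
    (hu : Tendsto (fun n : ℕ => u n / n) atTop (𝓝 m)) :
    Tendsto (fun n : ℕ => (u (n + 1) - u n) / n) atTop (𝓝 0) := by
  have hshift : Tendsto (fun n : ℕ => u (n + 1) / n) atTop (𝓝 m) := by
    have := ((tendsto_add_atTop_iff_nat 1).2 hu).div (tendsto_natCast_div_add_atTop (1 : ℝ))
      one_ne_zero
    rw [div_one] at this
    refine this.congr' ?_
    filter_upwards [eventually_ne_atTop 0] with n hn
    simp only [Pi.div_apply]
    push_cast
    field_simp
  simpa [sub_div] using hshift.sub hu

theorem tendsto_div_of_eq_zero_at_renewals {a : ℕ → ℕ} (ha : StrictMono a)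
    (hgap : Tendsto (fun n : ℕ => ((a (n + 1) : ℝ) - a n) / n) atTop (𝓝 0))
    {c : ℝ} (hc : 0 ≤ c) {D : ℕ → ℝ} (hD_nonneg : ∀ k, 0 ≤ D k)
    (hD_incr : ∀ k, D (k + 1) ≤ D k + c) (hD_zero : ∀ n, D (a n) = 0) :
    Tendsto (fun k : ℕ => D k / k) atTop (𝓝 0) := by
  -- `k` lies in the renewal interval `[a (N k), a (N k + 1))`
  choose! N hN using fun k (hk : a 0 ≤ k) =>
    ha.exists_between_of_tendsto_atTop ha.tendsto_atTop (Nat.lt_succ_of_le hk)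
  have hN_ge : ∀ j k, a j ≤ k → j ≤ N k := fun j k hk => by
    have := hN k ((ha.monotone j.zero_le).trans hk)
    by_contra! h
    have := ha.monotone (show N k + 1 ≤ j by omega)
    omega
  have hN_tendsto : Tendsto N atTop atTop :=
    tendsto_atTop_atTop.2 fun j => ⟨a j, hN_ge j⟩
  refine squeeze_zero' (.of_forall fun k => div_nonneg (hD_nonneg k) k.cast_nonneg) ?_
    (by simpa using (hgap.comp hN_tendsto).const_mul c)
  filter_upwards [eventually_ge_atTop (a 1)] with k hk
  obtain ⟨h_lo, h_hi⟩ := hN k ((ha.monotone zero_le_one).trans hk)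
  have hN_pos : (0 : ℝ) < N k := by exact_mod_cast hN_ge 1 k hk
  have hN_le : (N k : ℝ) ≤ k := by exact_mod_cast ha.le_apply.trans (Nat.lt_succ_iff.1 h_lo)
  have hDk : D k ≤ c * ((a (N k + 1) : ℝ) - a (N k)) := by
    have h_lo' : (a (N k) : ℝ) ≤ k := by exact_mod_cast Nat.lt_succ_iff.1 h_lo
    have h_hi' : (k : ℝ) + 1 ≤ a (N k + 1) := by exact_mod_cast h_hi
    calc D k ≤ D (a (N k)) + c * (k - a (N k)) :=
          le_add_mul_sub_of_succ_le_add hD_incr (Nat.lt_succ_iff.1 h_lo)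
      _ ≤ c * ((a (N k + 1) : ℝ) - a (N k)) := by
          rw [hD_zero, zero_add]; gcongr; linarith
  calc D k / k ≤ c * ((a (N k + 1) : ℝ) - a (N k)) / k := by gcongr
    _ ≤ c * (((a (N k + 1) : ℝ) - a (N k)) / N k) := by
      rw [mul_div_assoc]
      have : (a (N k) : ℝ) ≤ a (N k + 1) := by exact_mod_cast (ha (N k).lt_succ_self).le
      gcongr

theorem debt_sublinear_of_renewals_general
    {Ω : Type*} [MeasurableSpace Ω] (μ : MeasureTheory.Measure Ω)
    (K : ℕ → Ω → ℕ)
    (hK_mono : ∀ ω, StrictMono (fun n => K n ω))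
    (hK_indep : ProbabilityTheory.iIndepFun
      (fun n ω => K (n + 1) ω - K n ω) μ)
    (hK_ident : ∀ n : ℕ, ProbabilityTheory.IdentDistrib
      (fun ω => K (n + 1) ω - K n ω) (fun ω => K 1 ω - K 0 ω) μ μ)
    (hK_int : MeasureTheory.Integrable
      (fun ω => ((K 1 ω - K 0 ω : ℕ) : ℝ)) μ)
    (c : ℝ) (hc : 0 < c)
    (D : ℕ → Ω → ℝ)
    (hD_nonneg : ∀ k ω, 0 ≤ D k ω)
    (hD_incr : ∀ k ω, D (k + 1) ω ≤ D k ω + c)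
    (hD_zero : ∀ n ω, D (K n ω) ω = 0) :
    ∀ᵐ ω ∂μ, Filter.Tendsto (fun k : ℕ => D k ω / (k : ℝ))
      Filter.atTop (nhds 0) := by
  let X : ℕ → Ω → ℝ := fun n ω => ((K (n + 1) ω - K n ω : ℕ) : ℝ)
  have hslln := strong_law_ae_real X hK_int
    (fun i j hij => (hK_indep.indepFun hij).comp measurable_from_top measurable_from_top)
    (fun i => (hK_ident i).comp measurable_from_top)
  filter_upwards [hslln] with ω hω
  have hgap : Tendsto (fun n : ℕ => ((K (n + 1) ω : ℝ) - K n ω) / n) atTop (𝓝 0) := by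
    convert tendsto_sub_div_of_tendsto_div hω using 3 with n
    simp [X, Finset.sum_range_succ, Nat.cast_sub ((hK_mono ω).monotone n.le_succ)]
  exact tendsto_div_of_eq_zero_at_renewals (hK_mono ω) hgap hc.le (hD_nonneg · ω)
    (hD_incr · ω) (hD_zero · ω)

/-- key step of Lemma 3.  Let `(K_n)` be a strictly
increasing sequence of `ℕ`-valued random variables with `K_0 = 0` whose
increments are independent, identically distributed and integrable, let
`c > 0`, and let `(D k)` be nonnegative random variables with
`D (k+1) ≤ D k + c` and `D (K n) = 0` for every `n`.  Then almost surely
`D k / k → 0` as `k → ∞`. -/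
theorem debt_sublinear_of_renewals
    {Ω : Type*} [MeasurableSpace Ω] (μ : MeasureTheory.Measure Ω)
    [IsProbabilityMeasure μ]
    (K : ℕ → Ω → ℕ)
    (hK_mono : ∀ ω, StrictMono (fun n => K n ω))
    (hK0 : ∀ ω, K 0 ω = 0)
    (hK_indep : ProbabilityTheory.iIndepFun
      (fun n ω => K (n + 1) ω - K n ω) μ)
    (hK_ident : ∀ n : ℕ, ProbabilityTheory.IdentDistrib
      (fun ω => K (n + 1) ω - K n ω) (fun ω => K 1 ω - K 0 ω) μ μ)
    (hK_int : MeasureTheory.Integrable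
      (fun ω => ((K 1 ω - K 0 ω : ℕ) : ℝ)) μ)
    (c : ℝ) (hc : 0 < c)
    (D : ℕ → Ω → ℝ)
    (hD_nonneg : ∀ k ω, 0 ≤ D k ω)
    (hD_incr : ∀ k ω, D (k + 1) ω ≤ D k ω + c)
    (hD_zero : ∀ n ω, D (K n ω) ω = 0) :
    ∀ᵐ ω ∂μ, Filter.Tendsto (fun k : ℕ => D k ω / (k : ℝ))
      Filter.atTop (nhds 0) :=
  debt_sublinear_of_renewals_general μ K hK_mono hK_indep hK_ident hK_int c hc D hD_nonneg hD_incr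
    hD_zero
end

section
/- Suppose there exist constants ε > 0 and B ≥ 0 such that 0 ≤ q̃_X(k) ≤ B for all X ∈ S and k ≥ 1, and such that for every k ≥ 0, Σ_{X∈S} q̃_X(k+1) d_X(k) ≥ (1+ε) Σ_{X∈S} q*_X d_X(k). Then the debts are uniformly bounded — there exists a constant C with d_X(k) ≤ C for all X ∈ S and k ≥ 0 — and consequently liminf_{k→∞} (1/k) Σ_{j=1}^k q̃_X(j) ≥ q*_X for every X ∈ S. -/
/-!
The squared debt `V k = ∑ X, d X k ^ 2` is a Lyapunov function: the recursion gives
`V (k+1) ≤ V k + 2 ∑ X, (q*_X - q̃_X(k+1)) d X k + M` with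
`M = ∑ X, (q*_X² + B²)`, and the drift hypothesis turns this into
`V (k+1) ≤ V k - 2ε ∑ X, q*_X d X k + M`. So `V` cannot increase once the weighted debt
`∑ X, q*_X d X k` exceeds `M / 2ε`, while below that level `V ≤ (∑ X, q*_X⁻²) (∑ X, q*_X d X k)²`
is bounded. A debt bounded by `C` means that the first `k` rewards sum to at least
`k q*_X - C`, which gives the bound on the liminf of the averages.
-/

open Finset Filter Topology

section Debt

variable {q : ℝ} {t d : ℕ → ℝ}

lemma debt_nonneg (h0 : d 0 = 0) (hstep : ∀ k, d (k + 1) = max (d k + q - t (k + 1)) 0)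
    (k : ℕ) : 0 ≤ d k := by
  cases k with
  | zero => exact h0.ge
  | succ k => exact hstep k ▸ le_max_right _ _

lemma mul_sub_debt_le_sum_Icc (h0 : d 0 = 0)
    (hstep : ∀ k, d (k + 1) = max (d k + q - t (k + 1)) 0) (k : ℕ) :
    k * q - d k ≤ ∑ j ∈ Icc 1 k, t j := by
  induction k with
  | zero => simp [h0]
  | succ k ih =>
    have hle : d k + q - t (k + 1) ≤ d (k + 1) := hstep k ▸ le_max_left _ _
    rw [sum_Icc_succ_top (by omega)]
    push_cast
    linarith

lemma debt_succ_sq_le (hstep : ∀ k, d (k + 1) = max (d k + q - t (k + 1)) 0) {B : ℝ} {k : ℕ}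
    (hq : 0 ≤ q) (ht : 0 ≤ t (k + 1)) (htB : t (k + 1) ≤ B) :
    d (k + 1) ^ 2 ≤ d k ^ 2 + 2 * (q * d k - t (k + 1) * d k) + (q ^ 2 + B ^ 2) := by
  have hsq : d (k + 1) ^ 2 ≤ (d k + q - t (k + 1)) ^ 2 := by
    rw [hstep k]
    rcases le_total (d k + q - t (k + 1)) 0 with h | h
    · simpa [max_eq_right h] using sq_nonneg (d k + q - t (k + 1))
    · rw [max_eq_left h]
  nlinarith [mul_nonneg hq ht, mul_self_le_mul_self ht htB]

end Debt

lemma sum_sq_le_sum_inv_sq_mul_sq_sum {S : Type*} [Fintype S] {w a : S → ℝ}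
    (hw : ∀ X, 0 < w X) (ha : ∀ X, 0 ≤ a X) :
    ∑ X, a X ^ 2 ≤ (∑ X, (w X ^ 2)⁻¹) * (∑ X, w X * a X) ^ 2 := by
  rw [sum_mul]
  refine sum_le_sum fun X _ => ?_
  have hwa : 0 ≤ w X * a X := mul_nonneg (hw X).le (ha X)
  have hle : w X * a X ≤ ∑ Y, w Y * a Y :=
    single_le_sum (fun Y _ => mul_nonneg (hw Y).le (ha Y)) (mem_univ X)
  rw [inv_mul_eq_div, le_div_iff₀ (by have := hw X; positivity)]
  calc a X ^ 2 * w X ^ 2 = (w X * a X) ^ 2 := by ring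
    _ ≤ (∑ Y, w Y * a Y) ^ 2 := pow_le_pow_left₀ hwa hle 2

lemma exists_sum_sq_debt_le {S : Type*} [Fintype S] {q : S → ℝ} (hq : ∀ X, 0 < q X)
    {t d : S → ℕ → ℝ} (h0 : ∀ X, d X 0 = 0)
    (hstep : ∀ X k, d X (k + 1) = max (d X k + q X - t X (k + 1)) 0)
    {ε B : ℝ} (hε : 0 < ε) (ht : ∀ X k, 1 ≤ k → 0 ≤ t X k ∧ t X k ≤ B)
    (hdrift : ∀ k, (1 + ε) * ∑ X, q X * d X k ≤ ∑ X, t X (k + 1) * d X k) :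
    ∃ A, ∀ k, ∑ X, d X k ^ 2 ≤ A := by
  set M := ∑ X, (q X ^ 2 + B ^ 2)
  set K := ∑ X, (q X ^ 2)⁻¹
  set R := M / (2 * ε)
  have hnonneg X k : 0 ≤ d X k := debt_nonneg (h0 X) (hstep X) k
  have hdecay k : ∑ X, d X (k + 1) ^ 2 ≤ ∑ X, d X k ^ 2 - 2 * ε * ∑ X, q X * d X k + M := by
    have hsum : ∑ X, d X (k + 1) ^ 2 ≤
        ∑ X, (d X k ^ 2 + 2 * (q X * d X k - t X (k + 1) * d X k) + (q X ^ 2 + B ^ 2)) :=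
      sum_le_sum fun X _ =>
        debt_succ_sq_le (hstep X) (hq X).le (ht X (k + 1) k.succ_pos).1 (ht X (k + 1) k.succ_pos).2
    rw [sum_add_distrib, sum_add_distrib, ← mul_sum, sum_sub_distrib] at hsum
    linarith [hdrift k]
  refine ⟨K * R ^ 2 + M, fun k => ?_⟩
  induction k with
  | zero =>
    calc ∑ X, d X 0 ^ 2 = 0 := by simp [h0]
      _ ≤ K * R ^ 2 + M := by positivity
  | succ k ih =>
    have hwd : 0 ≤ ∑ X, q X * d X k := sum_nonneg fun X _ => mul_nonneg (hq X).le (hnonneg X k)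
    rcases le_or_gt (∑ X, q X * d X k) R with hsmall | hlarge
    · have hV := sum_sq_le_sum_inv_sq_mul_sq_sum hq (hnonneg · k)
      have hK : 0 ≤ K := sum_nonneg fun X _ => by positivity
      have : (∑ X, q X * d X k) ^ 2 ≤ R ^ 2 := pow_le_pow_left₀ hwd hsmall 2
      nlinarith [hdecay k, mul_le_mul_of_nonneg_left this hK]
    · have : M < 2 * ε * ∑ X, q X * d X k := by
        rwa [div_lt_iff₀ (by positivity), mul_comm] at hlarge
      linarith [hdecay k]

lemma le_liminf_sum_Icc_div {x : ℕ → ℝ} {q C B : ℝ}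
    (hlow : ∀ k : ℕ, k * q - C ≤ ∑ j ∈ Icc 1 k, x j) (hup : ∀ k, 1 ≤ k → x k ≤ B) :
    q ≤ liminf (fun k : ℕ => (∑ j ∈ Icc 1 k, x j) / k) atTop := by
  have htend : Tendsto (fun k : ℕ => q - C / k) atTop (𝓝 q) := by
    simpa using tendsto_const_nhds.sub
      (tendsto_const_nhds.div_atTop tendsto_natCast_atTop_atTop : Tendsto (fun k : ℕ => C / k) _ _)
  have hlower : ∀ᶠ k : ℕ in atTop, q - C / k ≤ (∑ j ∈ Icc 1 k, x j) / k := by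
    filter_upwards [eventually_ge_atTop 1] with k hk
    have hk0 : (0 : ℝ) < k := by exact_mod_cast hk
    rw [sub_le_iff_le_add, ← add_div, le_div_iff₀ hk0]
    linarith [hlow k]
  have hupper : ∀ᶠ k : ℕ in atTop, (∑ j ∈ Icc 1 k, x j) / k ≤ B := by
    filter_upwards [eventually_ge_atTop 1] with k hk
    have hk0 : (0 : ℝ) < k := by exact_mod_cast hk
    rw [div_le_iff₀ hk0]
    calc ∑ j ∈ Icc 1 k, x j ≤ ∑ _j ∈ Icc 1 k, B :=
          sum_le_sum fun j hj => hup j (mem_Icc.mp hj).1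
      _ = B * k := by simp [mul_comm]
  calc q = liminf (fun k : ℕ => q - C / k) atTop := htend.liminf_eq.symm
    _ ≤ _ := liminf_le_liminf hlower htend.isBoundedUnder_ge
          (isBoundedUnder_of_eventually_le hupper).isCoboundedUnder_ge

theorem debts_bounded_and_fulfilled_general
    {S : Type*} [Fintype S]
    (qstar : S → ℝ) (hqstar : ∀ X, 0 < qstar X)
    (qt : S → ℕ → ℝ)
    (d : S → ℕ → ℝ)
    (hd0 : ∀ X, d X 0 = 0)
    (hd : ∀ X, ∀ k : ℕ, 1 ≤ k →
      d X k = max (d X (k - 1) + qstar X - qt X k) 0)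
    (ε B : ℝ) (hε : 0 < ε)
    (hqt_bdd : ∀ X, ∀ k : ℕ, 1 ≤ k → 0 ≤ qt X k ∧ qt X k ≤ B)
    (hdrift : ∀ k : ℕ,
      (1 + ε) * ∑ X : S, qstar X * d X k ≤ ∑ X : S, qt X (k + 1) * d X k) :
    (∃ C : ℝ, ∀ X : S, ∀ k : ℕ, d X k ≤ C) ∧
    (∀ X : S, qstar X ≤ Filter.liminf
      (fun k : ℕ => (∑ j ∈ Finset.Icc 1 k, qt X j) / (k : ℝ))
      Filter.atTop) := by
  have hstep X k : d X (k + 1) = max (d X k + qstar X - qt X (k + 1)) 0 :=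
    hd X (k + 1) k.succ_pos
  obtain ⟨A, hA⟩ := exists_sum_sq_debt_le hqstar hd0 hstep hε hqt_bdd hdrift
  have hbdd X k : d X k ≤ √A :=
    Real.le_sqrt_of_sq_le <|
      (single_le_sum (fun Y _ => sq_nonneg (d Y k)) (mem_univ X)).trans (hA k)
  refine ⟨⟨√A, hbdd⟩, fun X => le_liminf_sum_Icc_div (C := √A) (fun k => ?_)
    fun k hk => (hqt_bdd X k hk).2⟩
  linarith [mul_sub_debt_le_sum_Icc (hd0 X) (hstep X) k, hbdd X k]

/-- deterministic content of Theorem 6/7.  If the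
per-frame rewards are uniformly bounded and in every frame the policy earns
debt-weighted reward at least `(1+ε)` times the debt-weighted requirement,
then the debts stay uniformly bounded and every task achieves its minimum
average reward requirement. -/
theorem debts_bounded_and_fulfilled
    {S : Type*} [Fintype S] [Nonempty S]
    (qstar : S → ℝ) (hqstar : ∀ X, 0 < qstar X)
    (qt : S → ℕ → ℝ)
    (d : S → ℕ → ℝ)
    (hd0 : ∀ X, d X 0 = 0)
    (hd : ∀ X, ∀ k : ℕ, 1 ≤ k →
      d X k = max (d X (k - 1) + qstar X - qt X k) 0)
    (ε B : ℝ) (hε : 0 < ε) (hB : 0 ≤ B)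
    (hqt_bdd : ∀ X, ∀ k : ℕ, 1 ≤ k → 0 ≤ qt X k ∧ qt X k ≤ B)
    (hdrift : ∀ k : ℕ,
      (1 + ε) * ∑ X : S, qstar X * d X k ≤ ∑ X : S, qt X (k + 1) * d X k) :
    (∃ C : ℝ, ∀ X : S, ∀ k : ℕ, d X k ≤ C) ∧
    (∀ X : S, qstar X ≤ Filter.liminf
      (fun k : ℕ => (∑ j ∈ Finset.Icc 1 k, qt X j) / (k : ℝ))
      Filter.atTop) :=
  debts_bounded_and_fulfilled_general qstar hqstar qt d hd0 hd ε B hε hqt_bdd hdrift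
end

section
/- Every greedy allocation g has maximum value: for every allocation n (i.e., every n : S → ℕ with n_X ≤ τ for all X and Σ_{X∈S} n_X ≤ τ), Σ_{X∈S} d_X Σ_{i=1}^{g_X} r_X^i ≥ Σ_{X∈S} d_X Σ_{i=1}^{n_X} r_X^i. (Hence, when all tasks have the same period, the Greedy Maximizer maximizes the debt-weighted frame reward Σ_X d_X q̃_X(k) in every frame, and is therefore feasibility optimal.) -/
/-!
Let `v` be the weighted reward collected at the last greedy step. Since rewards are antitone,
the gains of the greedy steps decrease, so every marginal reward `d_X r_X^i` with `i ≤ g_X`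
is at least `v`; every marginal reward with `g_X < i ≤ τ` was still available at the last step,
so it is at most `v`. Hence `i ↦ d_X r_X^i - v` is nonnegative up to `g_X` and nonpositive
after it, so `Σ_X Σ_{i ≤ n_X} (d_X r_X^i - v) ≤ Σ_X Σ_{i ≤ g_X} (d_X r_X^i - v)`, and
`Σ_X n_X ≤ τ = Σ_X g_X` together with `v ≥ 0` finishes the argument.
-/

/-- The number of times task `X` has been chosen among the first `k` greedy
steps `pick 0, …, pick (k-1)`. -/
def greedyCount {S : Type*} [DecidableEq S] (pick : ℕ → S) (k : ℕ) (X : S) : ℕ :=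
  ((Finset.range k).filter (fun j => pick j = X)).card

open Finset

lemma sum_Icc_le_sum_Icc_of_nonneg_of_nonpos {M : Type*} [AddCommMonoid M] [PartialOrder M]
    [IsOrderedAddMonoid M] {f : ℕ → M} {m n : ℕ}
    (hpos : ∀ i, 1 ≤ i → i ≤ m → 0 ≤ f i) (hneg : ∀ i, m < i → i ≤ n → f i ≤ 0) :
    ∑ i ∈ Icc 1 n, f i ≤ ∑ i ∈ Icc 1 m, f i := by
  rcases le_total n m with hnm | hmn
  · refine sum_le_sum_of_subset_of_nonneg (Icc_subset_Icc_right hnm) fun i hi _ => ?_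
    rw [mem_Icc] at hi
    exact hpos i hi.1 hi.2
  · rw [← sum_sdiff (Icc_subset_Icc_right hmn)]
    refine add_le_of_nonpos_left (sum_nonpos fun i hi => ?_)
    simp only [mem_sdiff, mem_Icc, not_and, not_le] at hi
    exact hneg i (hi.2 hi.1.1) hi.1.2

lemma sum_sum_Icc_le_of_threshold {ι : Type*} (s : Finset ι) {f : ι → ℕ → ℝ} {n g : ι → ℕ}
    {v : ℝ} (hv : 0 ≤ v) (hsum : ∑ X ∈ s, n X ≤ ∑ X ∈ s, g X)
    (hge : ∀ X ∈ s, ∀ i, 1 ≤ i → i ≤ g X → v ≤ f X i)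
    (hle : ∀ X ∈ s, ∀ i, g X < i → i ≤ n X → f X i ≤ v) :
    ∑ X ∈ s, ∑ i ∈ Icc 1 (n X), f X i ≤ ∑ X ∈ s, ∑ i ∈ Icc 1 (g X), f X i := by
  have hexcess : ∀ X ∈ s, ∑ i ∈ Icc 1 (n X), f X i - n X * v
      ≤ ∑ i ∈ Icc 1 (g X), f X i - g X * v := by
    intro X hX
    have h := sum_Icc_le_sum_Icc_of_nonneg_of_nonpos (f := fun i => f X i - v)
      (fun i h1 h2 => sub_nonneg.2 (hge X hX i h1 h2))
      (fun i h1 h2 => sub_nonpos.2 (hle X hX i h1 h2))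
    simpa [sum_sub_distrib] using h
  have hcount : (∑ X ∈ s, (n X : ℝ)) * v ≤ (∑ X ∈ s, (g X : ℝ)) * v :=
    mul_le_mul_of_nonneg_right (by exact_mod_cast hsum) hv
  have h := sum_le_sum hexcess
  rw [sum_sub_distrib, sum_sub_distrib, ← sum_mul, ← sum_mul] at h
  linarith

section GreedyCount

variable {S : Type*} [DecidableEq S] (pick : ℕ → S)

lemma greedyCount_succ (k : ℕ) (X : S) :
    greedyCount pick (k + 1) X = greedyCount pick k X + if pick k = X then 1 else 0 := by
  simp only [greedyCount, range_add_one, filter_insert]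
  split_ifs <;> simp [card_insert_of_notMem]

lemma greedyCount_mono (X : S) : Monotone (greedyCount pick · X) := fun _ _ h =>
  card_le_card (filter_subset_filter _ (range_subset_range.2 h))

lemma greedyCount_le (k : ℕ) (X : S) : greedyCount pick k X ≤ k :=
  (card_filter_le _ _).trans (card_range k).le

lemma sum_greedyCount [Fintype S] (k : ℕ) : ∑ X, greedyCount pick k X = k := by
  simpa [greedyCount] using
    (card_eq_sum_card_fiberwise (s := range k) (t := univ) (f := pick) fun _ _ => mem_univ _).symm

lemma exists_greedyCount_eq_of_lt {K : ℕ} {X : S} {i : ℕ} (h : i < greedyCount pick K X) :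
    ∃ k < K, pick k = X ∧ greedyCount pick k X = i := by
  induction K with
  | zero => simp [greedyCount] at h
  | succ K ih =>
    by_cases hK : i < greedyCount pick K X
    · obtain ⟨k, hk, hpk, hck⟩ := ih hK
      exact ⟨k, hk.trans K.lt_succ_self, hpk, hck⟩
    · rw [greedyCount_succ] at h
      split_ifs at h with hpK
      · exact ⟨K, K.lt_succ_self, hpK, by omega⟩
      · omega

end GreedyCount

section Greedy

variable {S : Type*} [DecidableEq S] (τ : ℕ) (r : S → ℕ → ℝ) (d : S → ℝ) (pick : ℕ → S)

def greedyGain (k : ℕ) : ℝ :=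
  d (pick k) * r (pick k) (greedyCount pick k (pick k) + 1)

def IsGreedy : Prop :=
  ∀ k < τ, greedyCount pick k (pick k) < τ ∧
    ∀ Z, greedyCount pick k Z < τ → d Z * r Z (greedyCount pick k Z + 1) ≤ greedyGain r d pick k

variable {τ r d pick}

lemma greedyGain_nonneg (hr : ∀ X, ∀ i ∈ Icc 1 τ, 0 ≤ r X i) (hd : ∀ X, 0 ≤ d X)
    {k : ℕ} (hk : k < τ) : 0 ≤ greedyGain r d pick k := by
  have hcount := greedyCount_le pick k (pick k)
  exact mul_nonneg (hd _) (hr _ _ (mem_Icc.2 ⟨le_add_self, by omega⟩))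

namespace IsGreedy

variable (hgreedy : IsGreedy τ r d pick) (hr : ∀ X, AntitoneOn (r X) (Set.Icc 1 τ))
  (hd : ∀ X, 0 ≤ d X)
include hgreedy hr hd

lemma mul_le_greedyGain {k : ℕ} (hk : k < τ) {Z : S} {i : ℕ}
    (hi : greedyCount pick k Z < i) (hiτ : i ≤ τ) : d Z * r Z i ≤ greedyGain r d pick k :=
  calc d Z * r Z i ≤ d Z * r Z (greedyCount pick k Z + 1) :=
        mul_le_mul_of_nonneg_left (hr Z ⟨by omega, by omega⟩ ⟨by omega, hiτ⟩ hi) (hd Z)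
    _ ≤ greedyGain r d pick k := (hgreedy k hk).2 Z (by omega)

lemma greedyGain_anti {k l : ℕ} (hkl : k ≤ l) (hl : l < τ) :
    greedyGain r d pick l ≤ greedyGain r d pick k :=
  hgreedy.mul_le_greedyGain hr hd (hkl.trans_lt hl)
    (Nat.lt_succ_of_le (greedyCount_mono pick _ hkl)) (hgreedy l hl).1

lemma greedyGain_last_le_mul {X : S} {i : ℕ} (hi : 1 ≤ i) (hig : i ≤ greedyCount pick τ X) :
    greedyGain r d pick (τ - 1) ≤ d X * r X i := by
  obtain ⟨k, hk, rfl, hck⟩ := exists_greedyCount_eq_of_lt pick (show i - 1 < greedyCount pick τ X by omega)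
  have hgain : greedyGain r d pick k = d (pick k) * r (pick k) i := by
    rw [greedyGain, hck, Nat.sub_add_cancel hi]
  exact hgain ▸ hgreedy.greedyGain_anti hr hd (by omega) (by omega)

end IsGreedy

end Greedy

theorem greedy_allocation_optimal_general
    {S : Type*} [Fintype S] [DecidableEq S]
    (τ : ℕ) (hτ : 0 < τ)
    (r : S → ℕ → ℝ)
    (hr_nonneg : ∀ X, ∀ i ∈ Finset.Icc 1 τ, 0 ≤ r X i)
    (hr_anti : ∀ X, ∀ i, 1 ≤ i → i + 1 ≤ τ → r X (i + 1) ≤ r X i)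
    (d : S → ℝ) (hd : ∀ X, 0 ≤ d X)
    (pick : ℕ → S) (g : S → ℕ)
    (hpick : ∀ k : ℕ, k < τ →
      greedyCount pick k (pick k) < τ ∧
      ∀ Z : S, greedyCount pick k Z < τ →
        d Z * r Z (greedyCount pick k Z + 1) ≤
          d (pick k) * r (pick k) (greedyCount pick k (pick k) + 1))
    (hg : ∀ X, g X = greedyCount pick τ X) :
    ∀ n : S → ℕ, (∀ X, n X ≤ τ) → (∑ X : S, n X ≤ τ) →
      ∑ X : S, d X * ∑ i ∈ Finset.Icc 1 (n X), r X i ≤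
        ∑ X : S, d X * ∑ i ∈ Finset.Icc 1 (g X), r X i := by
  intro n hn hsum
  obtain rfl : g = greedyCount pick τ := funext hg
  have hgreedy : IsGreedy τ r d pick := hpick
  have hr : ∀ X, AntitoneOn (r X) (Set.Icc 1 τ) := fun X =>
    antitoneOn_of_add_one_le Set.ordConnected_Icc fun i _ hi hi' => hr_anti X i hi.1 hi'.2
  have hlast : τ - 1 < τ := by omega
  simp only [mul_sum]
  refine sum_sum_Icc_le_of_threshold univ (greedyGain_nonneg hr_nonneg hd hlast)
    (by rwa [sum_greedyCount]) (fun X _ i hi hig => hgreedy.greedyGain_last_le_mul hr hd hi hig)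
    (fun X _ i hgi hin => hgreedy.mul_le_greedyGain hr hd hlast ?_ ((hn X).trans' hin))
  exact (greedyCount_mono pick X (Nat.sub_le τ 1)).trans_lt hgi

/-- Theorem 8, equal periods.  Every greedy allocation has
maximum debt-weighted value among all allocations `n : S → ℕ` with `n_X ≤ τ`
and `Σ_X n_X ≤ τ`.  A greedy allocation `g` is described by the sequence
`pick` of tasks chosen at the `τ` steps: at each step `k < τ` the chosen task
`pick k` has current count `< τ` and maximizes `d_Y · r_Y^{(count Y)+1}` among
all tasks with current count `< τ`, and `g_X` is the number of steps at which
`X` was chosen. -/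
theorem greedy_allocation_optimal
    {S : Type*} [Fintype S] [Nonempty S] [DecidableEq S]
    (τ : ℕ) (hτ : 0 < τ)
    (r : S → ℕ → ℝ)
    (hr_nonneg : ∀ X, ∀ i ∈ Finset.Icc 1 τ, 0 ≤ r X i)
    (hr_anti : ∀ X, ∀ i, 1 ≤ i → i + 1 ≤ τ → r X (i + 1) ≤ r X i)
    (d : S → ℝ) (hd : ∀ X, 0 ≤ d X)
    (pick : ℕ → S) (g : S → ℕ)
    (hpick : ∀ k : ℕ, k < τ →
      greedyCount pick k (pick k) < τ ∧
      ∀ Z : S, greedyCount pick k Z < τ →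
        d Z * r Z (greedyCount pick k Z + 1) ≤
          d (pick k) * r (pick k) (greedyCount pick k (pick k) + 1))
    (hg : ∀ X, g X = greedyCount pick τ X) :
    ∀ n : S → ℕ, (∀ X, n X ≤ τ) → (∑ X : S, n X ≤ τ) →
      ∑ X : S, d X * ∑ i ∈ Finset.Icc 1 (n X), r X i ≤
        ∑ X : S, d X * ∑ i ∈ Finset.Icc 1 (g X), r X i :=
  greedy_allocation_optimal_general τ hτ r hr_nonneg hr_anti d hd pick g hpick hg
end

section
/- Suppose f = (f_X^i) satisfies the feasibility conditions: (1) q*_X ≤ Σ_{i=1}^{τ_X} f_X^i r_X^i for every X ∈ S; (2) 0 ≤ f_X^i ≤ T/τ_X for all X, i; and (3) Σ_{X∈S} Σ_{i=1}^{τ_X} f_X^i ≤ T. Let Y ∈ S and 1 ≤ j < k ≤ τ_Y be such that f_Y^j < T/τ_Y and f_Y^k > 0, and set δ = min(T/τ_Y − f_Y^j, f_Y^k). Then the vector f̂ defined by f̂_Y^j = f_Y^j + δ, f̂_Y^k = f_Y^k − δ, and f̂_X^i = f_X^i for all other pairs (X,i), also satisfies conditions (1), (2) and (3). -/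
/-!
Moving mass `δ` from index `k` to index `j` of task `Y` leaves the total `∑ f` unchanged and
changes the reward sum of `Y` by `δ (r_Y^j - r_Y^k) ≥ 0`, because rewards are antitone and
`j < k`; the choice of `δ` keeps both modified entries inside `[0, T/τ_Y]`.
-/

open Finset

section Transfer

variable {ι R : Type*} [DecidableEq ι]

/-- Two independent corrections rather than nested `if`s, so that the sum identities hold even
for `j = k`; for `j ≠ k` this is the paper's `f̂`. -/
def transfer [AddGroup R] (g : ι → R) (j k : ι) (δ : R) (i : ι) : R :=
  g i + (if i = j then δ else 0) - (if i = k then δ else 0)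

theorem sum_mul_transfer [Ring R] (g w : ι → R) {s : Finset ι} {j k : ι} (hj : j ∈ s)
    (hk : k ∈ s) (δ : R) :
    ∑ i ∈ s, transfer g j k δ i * w i = ∑ i ∈ s, g i * w i + δ * (w j - w k) := by
  simp only [transfer, sub_mul, add_mul, ite_mul, zero_mul, sum_sub_distrib, sum_add_distrib,
    sum_ite_eq', if_pos hj, if_pos hk]
  noncomm_ring

theorem sum_transfer [AddCommGroup R] (g : ι → R) {s : Finset ι} {j k : ι} (hj : j ∈ s)
    (hk : k ∈ s) (δ : R) :
    ∑ i ∈ s, transfer g j k δ i = ∑ i ∈ s, g i := by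
  simp only [transfer, sum_sub_distrib, sum_add_distrib, sum_ite_eq', if_pos hj, if_pos hk,
    add_sub_cancel_right]

theorem transfer_mem_Icc [AddCommGroup R] [PartialOrder R] [IsOrderedAddMonoid R]
    {g : ι → R} {j k : ι} (hjk : j ≠ k) {δ c : R} (hδ : 0 ≤ δ) (hδj : δ ≤ c - g j)
    (hδk : δ ≤ g k) {i : ι} (hi : 0 ≤ g i ∧ g i ≤ c) :
    0 ≤ transfer g j k δ i ∧ transfer g j k δ i ≤ c := by
  unfold transfer
  by_cases hij : i = j
  · subst hij
    simp only [↓reduceIte, if_neg hjk, sub_zero]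
    exact ⟨add_nonneg hi.1 hδ, le_sub_iff_add_le'.1 hδj⟩
  · by_cases hik : i = k
    · subst hik
      simp only [↓reduceIte, if_neg hij, add_zero]
      exact ⟨sub_nonneg.2 hδk, (sub_le_self _ hδ).trans hi.2⟩
    · simpa only [if_neg hij, if_neg hik, add_zero, sub_zero] using hi

end Transfer

theorem antitoneOn_nat_Icc_of_succ_le {α : Type*} [Preorder α] {f : ℕ → α} {a b : ℕ}
    (hf : ∀ n, a ≤ n → n + 1 ≤ b → f (n + 1) ≤ f n) : AntitoneOn f (Set.Icc a b) :=
  antitoneOn_of_succ_le Set.ordConnected_Icc fun n _ hn hsn => by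
    rw [Order.succ_eq_add_one] at hsn ⊢
    exact hf n hn.1 hsn.2

theorem transfer_preserves_feasibility_general
    {S : Type*} [Fintype S] [DecidableEq S]
    (τ : S → ℕ)
    (T : ℕ)
    (r : S → ℕ → ℝ)
    (hr_anti : ∀ X, ∀ i, 1 ≤ i → i + 1 ≤ τ X → r X (i + 1) ≤ r X i)
    (qstar : S → ℝ)
    (f : S → ℕ → ℝ)
    (h1 : ∀ X, qstar X ≤ ∑ i ∈ Finset.Icc 1 (τ X), f X i * r X i)
    (h2 : ∀ X, ∀ i ∈ Finset.Icc 1 (τ X),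
      0 ≤ f X i ∧ f X i ≤ (T : ℝ) / (τ X : ℝ))
    (h3 : ∑ X : S, ∑ i ∈ Finset.Icc 1 (τ X), f X i ≤ (T : ℝ))
    (Y : S) (j k : ℕ) (hj : 1 ≤ j) (hjk : j < k) (hk : k ≤ τ Y)
    (δ : ℝ) (hδ : δ = min ((T : ℝ) / (τ Y : ℝ) - f Y j) (f Y k))
    (fhat : S → ℕ → ℝ)
    (hfhat : ∀ X i, fhat X i =
      if X = Y ∧ i = j then f Y j + δ
      else if X = Y ∧ i = k then f Y k - δ
      else f X i) :
    (∀ X, qstar X ≤ ∑ i ∈ Finset.Icc 1 (τ X), fhat X i * r X i) ∧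
    (∀ X, ∀ i ∈ Finset.Icc 1 (τ X),
      0 ≤ fhat X i ∧ fhat X i ≤ (T : ℝ) / (τ X : ℝ)) ∧
    (∑ X : S, ∑ i ∈ Finset.Icc 1 (τ X), fhat X i ≤ (T : ℝ)) := by
  have hj_mem : j ∈ Icc 1 (τ Y) := mem_Icc.2 ⟨hj, hjk.le.trans hk⟩
  have hk_mem : k ∈ Icc 1 (τ Y) := mem_Icc.2 ⟨hj.trans hjk.le, hk⟩
  have hδ_nonneg : 0 ≤ δ := hδ ▸ le_min (sub_nonneg.2 (h2 Y j hj_mem).2) (h2 Y k hk_mem).1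
  have hδ_j : δ ≤ T / τ Y - f Y j := hδ ▸ min_le_left _ _
  have hδ_k : δ ≤ f Y k := hδ ▸ min_le_right _ _
  have hfhat_eq : ∀ X, fhat X = if X = Y then transfer (f Y) j k δ else f X := by
    intro X
    funext i
    rw [hfhat]
    unfold transfer
    split_ifs <;> simp_all [hjk.ne, hjk.ne']
  refine ⟨fun X => ?_, fun X i hi => ?_, ?_⟩
  · rw [hfhat_eq]
    split_ifs with hXY
    · subst hXY
      have hr : r X k ≤ r X j :=
        antitoneOn_nat_Icc_of_succ_le (hr_anti X) (mem_Icc.1 hj_mem) (mem_Icc.1 hk_mem) hjk.le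
      rw [sum_mul_transfer _ _ hj_mem hk_mem]
      exact (h1 X).trans (le_add_of_nonneg_right (mul_nonneg hδ_nonneg (sub_nonneg.2 hr)))
    · exact h1 X
  · rw [hfhat_eq]
    split_ifs with hXY
    · subst hXY
      exact transfer_mem_Icc hjk.ne hδ_nonneg hδ_j hδ_k (h2 X i hi)
    · exact h2 X i hi
  · refine le_of_eq_of_le (sum_congr rfl fun X _ => ?_) h3
    rw [hfhat_eq]
    split_ifs with hXY
    · subst hXY
      exact sum_transfer _ hj_mem hk_mem δ
    · rfl

/-- reward-transfer observation for the Feasibility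
Checker.  If `f` satisfies the feasibility conditions (1)–(3) and
`f_Y^j < T/τ_Y`, `f_Y^k > 0` for some `j < k`, then transferring
`δ = min(T/τ_Y − f_Y^j, f_Y^k)` from index `k` to index `j` preserves the
three conditions. -/
theorem transfer_preserves_feasibility
    {S : Type*} [Fintype S] [Nonempty S] [DecidableEq S]
    (τ : S → ℕ) (hτ : ∀ X, 0 < τ X)
    (T : ℕ) (hT : T = Finset.univ.lcm τ)
    (r : S → ℕ → ℝ)
    (hr_nonneg : ∀ X, ∀ i ∈ Finset.Icc 1 (τ X), 0 ≤ r X i)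
    (hr_anti : ∀ X, ∀ i, 1 ≤ i → i + 1 ≤ τ X → r X (i + 1) ≤ r X i)
    (qstar : S → ℝ) (hqstar : ∀ X, 0 < qstar X)
    (f : S → ℕ → ℝ)
    (h1 : ∀ X, qstar X ≤ ∑ i ∈ Finset.Icc 1 (τ X), f X i * r X i)
    (h2 : ∀ X, ∀ i ∈ Finset.Icc 1 (τ X),
      0 ≤ f X i ∧ f X i ≤ (T : ℝ) / (τ X : ℝ))
    (h3 : ∑ X : S, ∑ i ∈ Finset.Icc 1 (τ X), f X i ≤ (T : ℝ))
    (Y : S) (j k : ℕ) (hj : 1 ≤ j) (hjk : j < k) (hk : k ≤ τ Y)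
    (hfj : f Y j < (T : ℝ) / (τ Y : ℝ)) (hfk : 0 < f Y k)
    (δ : ℝ) (hδ : δ = min ((T : ℝ) / (τ Y : ℝ) - f Y j) (f Y k))
    (fhat : S → ℕ → ℝ)
    (hfhat : ∀ X i, fhat X i =
      if X = Y ∧ i = j then f Y j + δ
      else if X = Y ∧ i = k then f Y k - δ
      else f X i) :
    (∀ X, qstar X ≤ ∑ i ∈ Finset.Icc 1 (τ X), fhat X i * r X i) ∧
    (∀ X, ∀ i ∈ Finset.Icc 1 (τ X),
      0 ≤ fhat X i ∧ fhat X i ≤ (T : ℝ) / (τ X : ℝ)) ∧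
    (∑ X : S, ∑ i ∈ Finset.Icc 1 (τ X), fhat X i ≤ (T : ℝ)) :=
  transfer_preserves_feasibility_general τ T r hr_anti qstar f h1 h2 h3 Y j k hj hjk hk δ hδ fhat
    hfhat
end

section
/- The water-filling vector f satisfies 0 ≤ f_i ≤ c for all i and Σ_{i=1}^m f_i r_i ≥ q*, and it minimizes the total time among all feasible vectors: for every h ∈ ℝ^m with 0 ≤ h_i ≤ c for all i and Σ_{i=1}^m h_i r_i ≥ q*, one has Σ_{i=1}^m f_i ≤ Σ_{i=1}^m h_i. -/
/-!
With residuals `q`, the greedy step gives `f i * r i = q i - q (i + 1)` and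
`q (k + 1) = max (q* - c (r 1 + ⋯ + r k)) 0`, so `Σ f i r i` telescopes to `q*`.
Let `p` be the first index at which `c (r 1 + ⋯ + r p)` reaches `q*`: then `f = c` before
`p`, `f = 0` after `p` and `r p > 0`. For a feasible `h`, `h - f` is `≤ 0` where `r ≥ r p`
and `≥ 0` where `r ≤ r p`, hence `0 ≤ Σ (h i - f i) r i ≤ r p Σ (h i - f i)`.
-/

open Finset

theorem Finset.sum_Icc_sub' {M : Type*} [AddCommGroup M] (q : ℕ → M) {a b : ℕ}
    (hab : a ≤ b + 1) : ∑ i ∈ Icc a b, (q i - q (i + 1)) = q a - q (b + 1) := by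
  rw [← Ico_add_one_right_eq_Icc, ← neg_sub (q (b + 1)), ← sum_Ico_sub q hab,
    ← sum_neg_distrib]
  simp only [neg_sub]

theorem Finset.sum_le_sum_of_single_crossing {ι 𝕜 : Type*} [LinearOrder ι] [CommRing 𝕜]
    [LinearOrder 𝕜] [IsStrictOrderedRing 𝕜] {s : Finset ι} {r f h : ι → 𝕜} {p : ι}
    (hp : p ∈ s) (hr : AntitoneOn r s) (hrp : 0 < r p)
    (hlt : ∀ i ∈ s, i < p → h i ≤ f i) (hgt : ∀ i ∈ s, p < i → f i ≤ h i)
    (hsum : ∑ i ∈ s, f i * r i ≤ ∑ i ∈ s, h i * r i) :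
    ∑ i ∈ s, f i ≤ ∑ i ∈ s, h i := by
  have hpointwise : ∀ i ∈ s, (h i - f i) * r i ≤ r p * (h i - f i) := by
    intro i hi
    rw [mul_comm (r p)]
    rcases lt_trichotomy i p with hip | rfl | hpi
    · exact mul_le_mul_of_nonpos_left (hr hi hp hip.le) (sub_nonpos.2 (hlt i hi hip))
    · rfl
    · exact mul_le_mul_of_nonneg_left (hr hp hi hpi.le) (sub_nonneg.2 (hgt i hi hpi))
  have hweighted : 0 ≤ r p * ∑ i ∈ s, (h i - f i) := calc
    0 ≤ ∑ i ∈ s, (h i - f i) * r i := by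
      simpa only [sub_mul, sum_sub_distrib, sub_nonneg] using hsum
    _ ≤ r p * ∑ i ∈ s, (h i - f i) := by
      rw [mul_sum]; exact sum_le_sum hpointwise
  rw [← sub_nonneg, ← sum_sub_distrib]
  exact nonneg_of_mul_nonneg_right hweighted hrp

namespace Waterfilling

variable {c : ℝ} {r q f : ℕ → ℝ} {i k m : ℕ}

lemma residual_succ_eq_max (hqi : q (i + 1) = if c * r i < q i then q i - c * r i else 0) :
    q (i + 1) = max (q i - c * r i) 0 := by
  rw [hqi, max_def]
  split_ifs <;> first | rfl | linarith

lemma residual_succ_eq (hc : 0 ≤ c) (hr : ∀ i ∈ Icc 1 m, 0 ≤ r i) (hq1 : 0 ≤ q 1)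
    (hq_rec : ∀ i, 1 ≤ i → q (i + 1) = if c * r i < q i then q i - c * r i else 0)
    (hk : k ≤ m) : q (k + 1) = max (q 1 - c * ∑ i ∈ Icc 1 k, r i) 0 := by
  induction k with
  | zero => simpa using hq1
  | succ k ih =>
    have hck : 0 ≤ c * r (k + 1) := mul_nonneg hc (hr (k + 1) (mem_Icc.2 ⟨by omega, hk⟩))
    rw [residual_succ_eq_max (hq_rec (k + 1) (by omega)), ih (by omega),
      sum_Icc_succ_top (by omega)]
    simp only [max_def]
    split_ifs <;> linarith

lemma fill_mem_Icc (hc : 0 ≤ c) (hri : 0 ≤ r i)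
    (hfi : f i = if c * r i < q i then c else if 0 < q i then q i / r i else 0) :
    0 ≤ f i ∧ f i ≤ c := by
  rw [hfi]
  split_ifs with hfull hpos
  · exact ⟨hc, le_rfl⟩
  · have hri' : 0 < r i := lt_of_le_of_ne hri fun h ↦ by simp [← h] at hfull; linarith
    exact ⟨by positivity, (div_le_iff₀ hri').2 (by linarith)⟩
  · exact ⟨le_rfl, hc⟩

lemma fill_mul_eq (hqi_nonneg : 0 ≤ q i)
    (hqi : q (i + 1) = if c * r i < q i then q i - c * r i else 0)
    (hfi : f i = if c * r i < q i then c else if 0 < q i then q i / r i else 0) :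
    f i * r i = q i - q (i + 1) := by
  rw [hfi, hqi]
  split_ifs with hfull hpos
  · ring
  · have : r i ≠ 0 := fun h ↦ by simp [h] at hfull; linarith
    rw [sub_zero, div_mul_cancel₀ _ this]
  · linarith

lemma fill_eq_of_residual_succ_pos (hqi : q (i + 1) = if c * r i < q i then q i - c * r i else 0)
    (hfi : f i = if c * r i < q i then c else if 0 < q i then q i / r i else 0)
    (hpos : 0 < q (i + 1)) : f i = c := by
  have hfull : c * r i < q i := by
    by_contra h
    rw [hqi, if_neg h] at hpos
    exact hpos.false
  rw [hfi, if_pos hfull]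

lemma fill_eq_zero_of_residual_nonpos (hcri : 0 ≤ c * r i)
    (hfi : f i = if c * r i < q i then c else if 0 < q i then q i / r i else 0)
    (hqi : q i ≤ 0) : f i = 0 := by
  rw [hfi, if_neg (by linarith), if_neg (by linarith)]

lemma sum_fill_mul_eq (hc : 0 ≤ c) (hr : ∀ i ∈ Icc 1 m, 0 ≤ r i) (hq1 : 0 ≤ q 1)
    (hq_le : q 1 ≤ c * ∑ i ∈ Icc 1 m, r i)
    (hq_rec : ∀ i, 1 ≤ i → q (i + 1) = if c * r i < q i then q i - c * r i else 0)
    (hf : ∀ i, 1 ≤ i → f i = if c * r i < q i then c else if 0 < q i then q i / r i else 0) :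
    ∑ i ∈ Icc 1 m, f i * r i = q 1 := by
  have hq_nonneg : ∀ i ∈ Icc 1 m, 0 ≤ q i := fun i hi ↦ by
    obtain ⟨j, rfl⟩ : ∃ j, i = j + 1 := Nat.exists_eq_add_one.2 (mem_Icc.1 hi).1
    have hjm : j ≤ m := by have := (mem_Icc.1 hi).2; omega
    exact residual_succ_eq hc hr hq1 hq_rec hjm ▸ le_max_right _ _
  have hq_last : q (m + 1) = 0 := by
    rw [residual_succ_eq hc hr hq1 hq_rec le_rfl, max_eq_right (by linarith)]
  rw [sum_congr rfl fun i hi ↦ fill_mul_eq (hq_nonneg i hi) (hq_rec i (mem_Icc.1 hi).1)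
      (hf i (mem_Icc.1 hi).1), sum_Icc_sub' q (by omega), hq_last, sub_zero]

lemma exists_pivot (hc : 0 ≤ c) (hr : ∀ i ∈ Icc 1 m, 0 ≤ r i) (hq1 : 0 < q 1)
    (hq_le : q 1 ≤ c * ∑ i ∈ Icc 1 m, r i)
    (hq_rec : ∀ i, 1 ≤ i → q (i + 1) = if c * r i < q i then q i - c * r i else 0)
    (hf : ∀ i, 1 ≤ i → f i = if c * r i < q i then c else if 0 < q i then q i / r i else 0) :
    ∃ p ∈ Icc 1 m, 0 < r p ∧ (∀ i ∈ Icc 1 m, i < p → f i = c) ∧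
      ∀ i ∈ Icc 1 m, p < i → f i = 0 := by
  have hq : ∀ k ≤ m, q (k + 1) = max (q 1 - c * ∑ i ∈ Icc 1 k, r i) 0 := fun _ ↦
    residual_succ_eq hc hr hq1.le hq_rec
  have hex : ∃ p, q 1 ≤ c * ∑ i ∈ Icc 1 p, r i := ⟨m, hq_le⟩
  obtain ⟨p, hp, hp_min⟩ : ∃ p, q 1 ≤ c * ∑ i ∈ Icc 1 p, r i ∧
      ∀ k < p, c * ∑ i ∈ Icc 1 k, r i < q 1 :=
    ⟨Nat.find hex, Nat.find_spec hex, fun k hk ↦ not_le.1 (Nat.find_min hex hk)⟩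
  have hpm : p ≤ m := not_lt.1 fun h ↦ (hp_min m h).not_ge hq_le
  obtain ⟨p, rfl⟩ : ∃ j, p = j + 1 :=
    Nat.exists_eq_add_one.2 (Nat.pos_of_ne_zero fun h ↦ by simp [h] at hp; linarith)
  refine ⟨p + 1, mem_Icc.2 ⟨by omega, hpm⟩, ?_, fun i hi hip ↦ ?_, fun i hi hpi ↦ ?_⟩
  · have hbefore := hp_min p p.lt_succ_self
    rw [sum_Icc_succ_top (by omega)] at hp
    exact pos_of_mul_pos_right (by linarith) hc
  · refine fill_eq_of_residual_succ_pos (hq_rec i (mem_Icc.1 hi).1) (hf i (mem_Icc.1 hi).1) ?_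
    rw [hq i (by omega)]
    exact lt_max_of_lt_left (sub_pos.2 (hp_min i hip))
  · obtain ⟨j, rfl⟩ : ∃ j, i = j + 1 := Nat.exists_eq_add_one.2 (by omega)
    have hjm := (mem_Icc.1 hi).2
    refine fill_eq_zero_of_residual_nonpos (mul_nonneg hc (hr _ hi)) (hf _ (by omega)) ?_
    have hmono : c * ∑ i ∈ Icc 1 (p + 1), r i ≤ c * ∑ i ∈ Icc 1 j, r i :=
      mul_le_mul_of_nonneg_left (sum_le_sum_of_subset_of_nonneg (Icc_subset_Icc_right (by omega))
        fun i hi _ ↦ hr i (Icc_subset_Icc_right (by omega) hi)) hc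
    rw [hq j (by omega), max_le_iff]
    exact ⟨by linarith, le_rfl⟩

end Waterfilling

theorem waterfilling_optimal_general
    (m : ℕ)
    (r : ℕ → ℝ)
    (hr_nonneg : ∀ i ∈ Finset.Icc 1 m, 0 ≤ r i)
    (hr_anti : ∀ i, 1 ≤ i → i + 1 ≤ m → r (i + 1) ≤ r i)
    (c : ℝ) (hc : 0 < c)
    (qstar : ℝ) (hq_pos : 0 < qstar)
    (hq_le : qstar ≤ c * ∑ i ∈ Finset.Icc 1 m, r i)
    (q : ℕ → ℝ) (f : ℕ → ℝ)
    (hq1 : q 1 = qstar)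
    (hq_rec : ∀ i, 1 ≤ i →
      q (i + 1) = if c * r i < q i then q i - c * r i else 0)
    (hf : ∀ i, 1 ≤ i →
      f i = if c * r i < q i then c else if 0 < q i then q i / r i else 0) :
    (∀ i ∈ Finset.Icc 1 m, 0 ≤ f i ∧ f i ≤ c) ∧
    (qstar ≤ ∑ i ∈ Finset.Icc 1 m, f i * r i) ∧
    (∀ h : ℕ → ℝ, (∀ i ∈ Finset.Icc 1 m, 0 ≤ h i ∧ h i ≤ c) →
      qstar ≤ ∑ i ∈ Finset.Icc 1 m, h i * r i →
      ∑ i ∈ Finset.Icc 1 m, f i ≤ ∑ i ∈ Finset.Icc 1 m, h i) := by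
  subst hq1
  have hfr := Waterfilling.sum_fill_mul_eq hc.le hr_nonneg hq_pos.le hq_le hq_rec hf
  refine ⟨fun i hi ↦ Waterfilling.fill_mem_Icc hc.le (hr_nonneg i hi) (hf i (mem_Icc.1 hi).1),
    hfr.ge, fun h hh hhr ↦ ?_⟩
  obtain ⟨p, hp, hrp, hfull, hempty⟩ :=
    Waterfilling.exists_pivot hc.le hr_nonneg hq_pos hq_le hq_rec hf
  have hr : AntitoneOn r ↑(Icc 1 m) := by
    rw [coe_Icc]
    exact antitoneOn_of_succ_le Set.ordConnected_Icc fun i _ hi hi' ↦ hr_anti i hi.1 hi'.2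
  exact sum_le_sum_of_single_crossing hp hr hrp (fun i hi hip ↦ hfull i hi hip ▸ (hh i hi).2)
    (fun i hi hpi ↦ hempty i hi hpi ▸ (hh i hi).1) (hfr.trans_le hhr)

/-- correctness of the water-filling step of the
Feasibility Checker.  Let `r_1 ≥ ⋯ ≥ r_m ≥ 0`, `c > 0`, and
`0 < q* ≤ c Σ_i r_i`.  The water-filling vector `f`, defined greedily with
residual requirements `q_1 = q*` and
`q_{i+1} = q_i − c·r_i` if `q_i > c·r_i`, else `q_{i+1} = 0`, with
`f_i = c` if `q_i > c·r_i`, `f_i = q_i / r_i` if `0 < q_i ≤ c·r_i`, and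
`f_i = 0` if `q_i ≤ 0`, satisfies `0 ≤ f_i ≤ c` and `Σ_i f_i r_i ≥ q*`,
and minimizes `Σ_i f_i` among all such feasible vectors. -/
theorem waterfilling_optimal
    (m : ℕ) (hm : 0 < m)
    (r : ℕ → ℝ)
    (hr_nonneg : ∀ i ∈ Finset.Icc 1 m, 0 ≤ r i)
    (hr_anti : ∀ i, 1 ≤ i → i + 1 ≤ m → r (i + 1) ≤ r i)
    (c : ℝ) (hc : 0 < c)
    (qstar : ℝ) (hq_pos : 0 < qstar)
    (hq_le : qstar ≤ c * ∑ i ∈ Finset.Icc 1 m, r i)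
    (q : ℕ → ℝ) (f : ℕ → ℝ)
    (hq1 : q 1 = qstar)
    (hq_rec : ∀ i, 1 ≤ i →
      q (i + 1) = if c * r i < q i then q i - c * r i else 0)
    (hf : ∀ i, 1 ≤ i →
      f i = if c * r i < q i then c else if 0 < q i then q i / r i else 0) :
    (∀ i ∈ Finset.Icc 1 m, 0 ≤ f i ∧ f i ≤ c) ∧
    (qstar ≤ ∑ i ∈ Finset.Icc 1 m, f i * r i) ∧
    (∀ h : ℕ → ℝ, (∀ i ∈ Finset.Icc 1 m, 0 ≤ h i ∧ h i ≤ c) →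
      qstar ≤ ∑ i ∈ Finset.Icc 1 m, h i * r i →
      ∑ i ∈ Finset.Icc 1 m, f i ≤ ∑ i ∈ Finset.Icc 1 m, h i) :=
  waterfilling_optimal_general m r hr_nonneg hr_anti c hc qstar hq_pos hq_le q f hq1 hq_rec hf
end
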